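/- Relative canonicity of λDD-O-UC: every Boolean function f of arity n has a unique λDD-O-UC graph φ of arity n such that ⟦φ⟧ = f and φ is reduced with respect to the reduction operator, i.e. [φ] = φ. -/
import Mathlib


abbrev BF (n : ℕ) : Type := (Fin n → Bool) → Bool

def shannon {n : ℕ} (f g : BF n) : BF (n + 1) :=
  fun x => (!(x 0) && f (Fin.tail x)) || (x 0 && g (Fin.tail x))

def constF (n : ℕ) (b : Bool) : BF n := fun _ => b

/-- The elementary letters of the alphabet Δ = {u, c11, c10, c01, c00}. -/
inductive UCLetter : Type
  | u | c11 | c10 | c01 | c00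
deriving DecidableEq

/-- λDD-O-UC graphs of a given arity. -/
inductive UC : ℕ → Type
  | leaf0 : UC 0
  | leaf1 : UC 0
  | letter {n : ℕ} : UCLetter → UC n → UC (n + 1)
  | node {n : ℕ} : UC n → UC n → UC (n + 1)
deriving DecidableEq

/-- Semantics of λDD-O-UC graphs. -/
def UC.sem : {n : ℕ} → UC n → BF n
  | _, .leaf0 => constF 0 false
  | _, .leaf1 => constF 0 true
  | _, .letter .u φ => shannon φ.sem φ.sem
  | _, .letter .c11 φ => shannon φ.sem (constF _ true)
  | _, .letter .c10 φ => shannon φ.sem (constF _ false)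
  | _, .letter .c01 φ => shannon (constF _ true) φ.sem
  | _, .letter .c00 φ => shannon (constF _ false) φ.sem
  | _, .node φ₁ φ₂ => shannon φ₁.sem φ₂.sem

/-- The graph (𝟘, n). -/
def UC.mkZero : (n : ℕ) → UC n
  | 0 => .leaf0
  | n + 1 => .letter .u (UC.mkZero n)

/-- The graph (𝟙, n). -/
def UC.mkOne : (n : ℕ) → UC n
  | 0 => .leaf1
  | n + 1 => .letter .u (UC.mkOne n)

/-- The smart constructor ⊛ (match cases in priority order). -/
def UC.smart {n : ℕ} (φ₁ φ₂ : UC n) : UC (n + 1) :=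
  if φ₁ = φ₂ then .letter .u φ₁
  else if φ₂ = UC.mkOne n then .letter .c11 φ₁
  else if φ₂ = UC.mkZero n then .letter .c10 φ₁
  else if φ₁ = UC.mkOne n then .letter .c01 φ₂
  else if φ₁ = UC.mkZero n then .letter .c00 φ₂
  else .node φ₁ φ₂

def UC.size : {n : ℕ} → UC n → ℕ
  | _, .leaf0 => 1
  | _, .leaf1 => 1
  | _, .letter _ φ => φ.size + 1
  | _, .node φ₁ φ₂ => φ₁.size + φ₂.size + 1

theorem UC.lt_size : ∀ {n : ℕ} (φ : UC n), n < φ.size := by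
  intro n φ
  induction φ with
  | leaf0 => simp [UC.size]
  | leaf1 => simp [UC.size]
  | letter _ φ ih => simp [UC.size]; omega
  | node φ₁ φ₂ ih₁ ih₂ => simp [UC.size]; omega

theorem UC.size_mkZero (n : ℕ) : (UC.mkZero n).size = n + 1 := by
  induction n with
  | zero => rfl
  | succ n ih => simp [UC.mkZero, UC.size, ih]

theorem UC.size_mkOne (n : ℕ) : (UC.mkOne n).size = n + 1 := by
  induction n with
  | zero => rfl
  | succ n ih => simp [UC.mkOne, UC.size, ih]

/-- The reduction operator [·]: eliminate each letter and re-introduce via ⊛. -/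
def UC.reduce : {n : ℕ} → UC n → UC n
  | _, .leaf0 => .leaf0
  | _, .leaf1 => .leaf1
  | _, .letter .u φ => UC.smart φ.reduce φ.reduce
  | _, .letter .c11 φ => UC.smart φ.reduce (UC.mkOne _).reduce
  | _, .letter .c10 φ => UC.smart φ.reduce (UC.mkZero _).reduce
  | _, .letter .c01 φ => UC.smart (UC.mkOne _).reduce φ.reduce
  | _, .letter .c00 φ => UC.smart (UC.mkZero _).reduce φ.reduce
  | _, .node φ₁ φ₂ => UC.smart φ₁.reduce φ₂.reduce
  termination_by n φ => φ.size
  decreasing_by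
    all_goals simp [UC.size, UC.size_mkOne, UC.size_mkZero]
    all_goals first
      | omega
      | (have := UC.lt_size φ; omega)



def canon : (n : ℕ) → BF n → UC n
  | 0, f => if f (fun i => i.elim0) then .leaf1 else .leaf0
  | n+1, f => UC.smart (canon n (fun y => f (Fin.cons false y)))
                       (canon n (fun y => f (Fin.cons true y)))

theorem sem_mkZero (n : ℕ) : (UC.mkZero n).sem = constF n false := by
  induction n with
  | zero => rfl
  | succ n ih =>
    funext x
    cases h : x 0 <;> simp [UC.mkZero, UC.sem, ih, shannon, constF, h]

theorem sem_mkOne (n : ℕ) : (UC.mkOne n).sem = constF n true := by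
  induction n with
  | zero => rfl
  | succ n ih =>
    funext x
    cases h : x 0 <;> simp [UC.mkOne, UC.sem, ih, shannon, constF, h]

theorem sem_smart {n : ℕ} (φ₁ φ₂ : UC n) :
    (UC.smart φ₁ φ₂).sem = shannon φ₁.sem φ₂.sem := by
  unfold UC.smart
  split_ifs with h1 h2 h3 h4 h5
  · subst h1; rfl
  · subst h2; simp [UC.sem, sem_mkOne]
  · subst h3; simp [UC.sem, sem_mkZero]
  · subst h4; simp [UC.sem, sem_mkOne]
  · subst h5; simp [UC.sem, sem_mkZero]
  · rfl

theorem shannon_cons {n : ℕ} (f g : BF n) (b : Bool) (y : Fin n → Bool) :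
    shannon f g (Fin.cons b y) = if b then g y else f y := by
  cases b <;> simp [shannon]

theorem canon_shannon {n : ℕ} (f g : BF n) :
    canon (n+1) (shannon f g) = UC.smart (canon n f) (canon n g) := by
  simp only [canon]
  have hf : (fun y => shannon f g (Fin.cons false y)) = f := by
    funext y; simp [shannon_cons]
  have hg : (fun y => shannon f g (Fin.cons true y)) = g := by
    funext y; simp [shannon_cons]
  rw [hf, hg]

theorem sem_canon (n : ℕ) (f : BF n) : (canon n f).sem = f := by
  induction n with
  | zero =>
    simp only [canon]
    split <;> (funext x; rw [Subsingleton.elim x (fun i => i.elim0)]) <;>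
      simp_all [UC.sem, constF]
  | succ n ih =>
    simp only [canon, sem_smart, ih]
    funext x
    rw [← Fin.cons_self_tail x, shannon_cons]
    cases h : x 0 <;> simp [Fin.cons_zero, h]

theorem reduce_mkZero (n : ℕ) : (UC.mkZero n).reduce = UC.mkZero n := by
  induction n with
  | zero => simp [UC.mkZero, UC.reduce]
  | succ n ih => simp [UC.mkZero, UC.reduce, ih, UC.smart]

theorem reduce_mkOne (n : ℕ) : (UC.mkOne n).reduce = UC.mkOne n := by
  induction n with
  | zero => simp [UC.mkOne, UC.reduce]
  | succ n ih => simp [UC.mkOne, UC.reduce, ih, UC.smart]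

theorem reduce_smart {n : ℕ} (φ₁ φ₂ : UC n)
    (h₁ : φ₁.reduce = φ₁) (h₂ : φ₂.reduce = φ₂) :
    (UC.smart φ₁ φ₂).reduce = UC.smart φ₁ φ₂ := by
  unfold UC.smart
  split_ifs with g1 g2 g3 g4 g5 <;>
    simp_all [UC.reduce, reduce_mkOne, reduce_mkZero, UC.smart]

theorem reduce_canon (n : ℕ) (f : BF n) : (canon n f).reduce = canon n f := by
  induction n with
  | zero => simp only [canon]; split <;> simp [UC.reduce]
  | succ n ih => simp only [canon]; exact reduce_smart _ _ (ih _) (ih _)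

theorem canon_const_true (n : ℕ) : canon n (constF n true) = UC.mkOne n := by
  induction n with
  | zero => rfl
  | succ n ih =>
    simp only [canon]
    have : ∀ b, (fun y => constF (n+1) true (Fin.cons b y)) = constF n true := by
      intro b; funext y; rfl
    rw [this, this, ih, UC.smart]
    simp [UC.mkOne]

theorem canon_const_false (n : ℕ) : canon n (constF n false) = UC.mkZero n := by
  induction n with
  | zero => rfl
  | succ n ih =>
    simp only [canon]
    have : ∀ b, (fun y => constF (n+1) false (Fin.cons b y)) = constF n false := by
      intro b; funext y; rfl
    rw [this, this, ih, UC.smart]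
    simp [UC.mkZero]

theorem reduced_eq_canon : ∀ {n : ℕ} (φ : UC n), φ.reduce = φ → φ = canon n φ.sem := by
  intro n φ
  induction φ with
  | leaf0 => intro _; rfl
  | leaf1 => intro _; rfl
  | @letter n ℓ φ ih =>
    intro h
    cases ℓ <;> simp only [UC.reduce, reduce_mkOne, reduce_mkZero] at h <;>
      [skip; skip; skip; skip; skip]
    case u =>
      have hred : φ.reduce = φ := by
        unfold UC.smart at h
        split_ifs at h <;>
          first
            | (rw [UC.letter.injEq] at h; exact h.2)
            | (exact absurd h (by simp))
            | simp_all
      rw [hred] at h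
      have hs : UC.smart φ φ = UC.letter .u φ := by simp [UC.smart]
      show UC.letter .u φ = canon (n+1) (shannon φ.sem φ.sem)
      rw [canon_shannon, ← ih hred, hs]
    case c11 =>
      have hred : φ.reduce = φ := by
        unfold UC.smart at h
        split_ifs at h <;>
          first
            | (rw [UC.letter.injEq] at h; exact h.2)
            | (exact absurd h (by simp))
            | simp_all
      rw [hred] at h
      show UC.letter .c11 φ = canon (n+1) (shannon φ.sem (constF n true))
      rw [canon_shannon, canon_const_true, ← ih hred, h]
    case c10 =>
      have hred : φ.reduce = φ := by
        unfold UC.smart at h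
        split_ifs at h <;>
          first
            | (rw [UC.letter.injEq] at h; exact h.2)
            | (exact absurd h (by simp))
            | simp_all
      rw [hred] at h
      show UC.letter .c10 φ = canon (n+1) (shannon φ.sem (constF n false))
      rw [canon_shannon, canon_const_false, ← ih hred, h]
    case c01 =>
      have hred : φ.reduce = φ := by
        unfold UC.smart at h
        split_ifs at h <;>
          first
            | (rw [UC.letter.injEq] at h; exact h.2)
            | (exact absurd h (by simp))
            | simp_all
      rw [hred] at h
      show UC.letter .c01 φ = canon (n+1) (shannon (constF n true) φ.sem)
      rw [canon_shannon, canon_const_true, ← ih hred, h]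
    case c00 =>
      have hred : φ.reduce = φ := by
        unfold UC.smart at h
        split_ifs at h <;>
          first
            | (rw [UC.letter.injEq] at h; exact h.2)
            | (exact absurd h (by simp))
            | simp_all
      rw [hred] at h
      show UC.letter .c00 φ = canon (n+1) (shannon (constF n false) φ.sem)
      rw [canon_shannon, canon_const_false, ← ih hred, h]
  | @node n φ₁ φ₂ ih₁ ih₂ =>
    intro h
    rw [UC.reduce] at h
    have hpair : φ₁.reduce = φ₁ ∧ φ₂.reduce = φ₂ := by
      unfold UC.smart at h
      split_ifs at h <;>
        first
          | (rw [UC.node.injEq] at h; exact h)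
          | (exact absurd h (by simp))
          | simp_all
    rw [hpair.1, hpair.2] at h
    show UC.node φ₁ φ₂ = canon (n+1) (shannon φ₁.sem φ₂.sem)
    rw [canon_shannon, ← ih₁ hpair.1, ← ih₂ hpair.2, h]

/-- Relative canonicity of λDD-O-UC: every Boolean function has a unique
semantically equivalent graph that is reduced w.r.t. the reduction operator. -/
theorem uc_relative_canonicity (n : ℕ) (f : BF n) :
    ∃! φ : UC n, φ.sem = f ∧ φ.reduce = φ := by
  refine ⟨canon n f, ⟨sem_canon n f, reduce_canon n f⟩, ?_⟩
  rintro ψ ⟨hs, hr⟩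
  rw [reduced_eq_canon ψ hr, hs]
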